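/- arXiv:2108.11090 — 2 statements merged into one kernel-verified Lean document; each statement's English description precedes it below -/
import Mathlib

section
/- (Dobinski-like formula) Let λ be a real number with 0 < λ < 1/2 and let x be a real number. Then for every n ≥ 0, the infinite series Σ_{k=0}^{∞} ((k)_{n,λ}/k!) (1/(1−λ))^k (x)_{k,λ} converges and φ_{n,λ}(x) = (1−λ)^{x/λ} · Σ_{k=0}^{∞} ((k)_{n,λ}/k!) (1/(1−λ))^k (x)_{k,λ}, where (1−λ)^{x/λ} = e_λ^x(−1) denotes the real power. -/
/-!
Writing `N! S_{2,λ}(n,N) = Σ_{k+m=N} N!/(k! m!) (k)_{n,λ} (-1)^m` and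
`(x)_{k+m,λ} = (x)_{k,λ} (x-kλ)_{m,λ}`, the Bell polynomial `φ_{n,λ}(x)` is the sum of the double
series `Σ_{k,m} (k)_{n,λ}/k! · (x)_{k+m,λ} (-1)^m/m!`, grouped along antidiagonals. Summing over `m`
first instead gives `(k)_{n,λ}/k! · (x)_{k,λ} e_λ^{x-kλ}(-1)`, and the real binomial series turns
`e_λ^{x-kλ}(-1)` into `(1-λ)^{x/λ} (1-λ)^{-k}`. The two orders of summation agree because the
double series converges absolutely: `|(x)_{N,λ}| ≤ (|x|)_{N,-λ}`, and the resulting majorant is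
again summed by degenerate exponentials, the last one evaluated at `1/(1-λ)` with parameter `-λ`,
which converges precisely because `λ/(1-λ) < 1`, i.e. `λ < 1/2`.
-/

open Nat PowerSeries Finset

noncomputable section

/-- λ-falling factorial (x)_{n,λ} = x(x−λ)···(x−(n−1)λ). -/
def dfall (l x : ℝ) (n : ℕ) : ℝ := ∏ i ∈ range n, (x - i * l)

/-- degenerate exponential e_λ^x(t) = Σ (x)_{n,λ} t^n/n! as a formal power series. -/
def degExp (l x : ℝ) : PowerSeries ℝ := PowerSeries.mk fun n => dfall l x n / n !

/-- degenerate logarithm log_λ(1+t) = Σ_{n≥1} (∏_{j=1}^{n−1}(λ−j)) t^n/n!. -/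
def degLog (l : ℝ) : PowerSeries ℝ :=
  PowerSeries.mk fun n => if n = 0 then 0 else (∏ j ∈ range (n - 1), (l - (j + 1))) / n !

/-- composition Σ_k a_k f^k, valid when f has zero constant term. -/
def psComp (a : ℕ → ℝ) (f : PowerSeries ℝ) : PowerSeries ℝ :=
  PowerSeries.mk fun n => ∑ k ∈ range (n + 1), a k * PowerSeries.coeff n (f ^ k)

/-- e_λ^x(f), the degenerate exponential composed with f (f with zero constant term). -/
def degExpComp (l x : ℝ) (f : PowerSeries ℝ) : PowerSeries ℝ :=
  psComp (fun k => dfall l x k / k !) f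

/-- degenerate Stirling numbers of the second kind. -/
def dS2 (l : ℝ) (n k : ℕ) : ℝ :=
  (n ! : ℝ) / k ! * PowerSeries.coeff n ((degExp l 1 - 1) ^ k)

/-- degenerate Stirling numbers of the first kind. -/
def dS1 (l : ℝ) (n k : ℕ) : ℝ :=
  (n ! : ℝ) / k ! * PowerSeries.coeff n (degLog l ^ k)

/-- (signed) Stirling numbers of the first kind: coefficients of x(x-1)···(x-n+1). -/
def sS1 (n k : ℕ) : ℝ := (descPochhammer ℝ n).coeff k

/-- fully degenerate Bell polynomial φ_{n,λ}(x). -/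
def dBell (l : ℝ) (n : ℕ) (x : ℝ) : ℝ := ∑ k ∈ range (n + 1), dS2 l n k * dfall l x k

/-- degenerate Whitney numbers of the second kind. -/
def dW (m : ℕ) (l : ℝ) (n k : ℕ) : ℝ :=
  (n ! : ℝ) / k ! *
    PowerSeries.coeff n (degExp l 1 * ((degExp l (m : ℝ) - 1) * PowerSeries.C (R := ℝ) (1 / m)) ^ k)

/-- fully degenerate Dowling polynomial d_{m,λ}(n,x). -/
def dDowling (m : ℕ) (l : ℝ) (n : ℕ) (x : ℝ) : ℝ :=
  ∑ k ∈ range (n + 1), dW m l n k * dfall l x k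

/-- division of a power series by t (coefficient shift). -/
def divT (f : PowerSeries ℝ) : PowerSeries ℝ :=
  PowerSeries.mk fun n => PowerSeries.coeff (n + 1) f

/-- degenerate Bernoulli polynomials β_{n,λ}(x): (t/(e_λ(t)−1)) e_λ^x(t) = Σ β_{n,λ}(x) tⁿ/n!. -/
def dBernoulliPoly (l : ℝ) (n : ℕ) (x : ℝ) : ℝ :=
  (n ! : ℝ) * PowerSeries.coeff n ((divT (degExp l 1 - 1))⁻¹ * degExp l x)

/-- the λ-falling factorial polynomial (x)_{k,λ}. -/
def dfallPoly (l : ℝ) (k : ℕ) : Polynomial ℝ :=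
  ∏ i ∈ range k, (Polynomial.X - Polynomial.C (i * l))

/-- degenerate poly-Bell polynomials B^{(r)}_{n,λ}(x). -/
def dPolyBell (r : ℤ) (l : ℝ) (n : ℕ) (x : ℝ) : ℝ :=
  (n ! : ℝ) * PowerSeries.coeff n
    (divT (psComp (fun k => if k = 0 then 0 else dfall l 1 k / ((k - 1)! * (k : ℝ) ^ r))
        (degLog l)) *
      (divT (degExp l 1 - 1))⁻¹ * degExp l x)

/-- degenerate Bernoulli polynomials of the second kind b_{n,λ}(x). -/
def dBern2 (l : ℝ) (n : ℕ) (x : ℝ) : ℝ :=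
  (n ! : ℝ) *
    PowerSeries.coeff n ((divT (degLog l))⁻¹ * PowerSeries.mk fun j => dfall 1 x j / j !)

lemma dfall_add (l x : ℝ) (k m : ℕ) :
    dfall l x (k + m) = dfall l x k * dfall l (x - k * l) m := by
  simp only [dfall, prod_range_add]
  congr 1
  refine prod_congr rfl fun i _ => ?_
  push_cast
  ring

lemma dfall_div_factorial_eq_choose_mul_pow {l : ℝ} (hl : l ≠ 0) (y : ℝ) (m : ℕ) :
    dfall l y m / m ! = Ring.choose (y / l) m * l ^ m := by
  rw [Ring.choose_eq_smul, ← Polynomial.aeval_eq_smeval, Polynomial.aeval_def,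
    Polynomial.eval₂_eq_eval_map, descPochhammer_map, descPochhammer_eval_eq_prod_range,
    smul_eq_mul, dfall, pow_eq_prod_const, mul_assoc, ← prod_mul_distrib, div_eq_inv_mul]
  congr 1
  refine prod_congr rfl fun i _ => ?_
  field_simp

lemma hasSum_dfall_div_factorial_mul_pow {l : ℝ} (hl : l ≠ 0) (y : ℝ) {t : ℝ}
    (ht : |l * t| < 1) :
    HasSum (fun m => dfall l y m / m ! * t ^ m) ((1 + l * t) ^ (y / l)) := by
  have hmem : l * t ∈ Metric.eball (0 : ℝ) 1 := by
    rw [Metric.mem_eball, edist_zero_right, enorm_eq_nnnorm]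
    exact_mod_cast (show ‖l * t‖₊ < 1 from ht)
  have h := Real.one_add_rpow_hasFPowerSeriesOnBall_zero (a := y / l) |>.hasSum hmem
  simp only [zero_add, binomialSeries_apply, List.ofFn_const, List.prod_replicate,
    smul_eq_mul] at h
  refine h.congr_fun fun m => ?_
  rw [dfall_div_factorial_eq_choose_mul_pow hl, mul_pow]
  ring

lemma coeff_degExp (l y : ℝ) (n : ℕ) : coeff n (degExp l y) = dfall l y n / n ! :=
  coeff_mk _ _

lemma degExp_eq_rescale_binomialSeries {l : ℝ} (hl : l ≠ 0) (y : ℝ) :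
    degExp l y = rescale l (binomialSeries ℝ (y / l)) := by
  ext m
  rw [coeff_degExp, dfall_div_factorial_eq_choose_mul_pow hl, coeff_rescale,
    binomialSeries_coeff, smul_eq_mul, mul_one, mul_comm]

lemma degExp_add {l : ℝ} (hl : l ≠ 0) (a b : ℝ) :
    degExp l (a + b) = degExp l a * degExp l b := by
  simp only [degExp_eq_rescale_binomialSeries hl, add_div, binomialSeries_add, map_mul]

lemma degExp_one_pow {l : ℝ} (hl : l ≠ 0) (k : ℕ) : degExp l 1 ^ k = degExp l k := by
  induction k with
  | zero => simp [degExp_eq_rescale_binomialSeries hl]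
  | succ k ih => rw [pow_succ, ih, ← degExp_add hl, Nat.cast_succ]

lemma dS2_eq_sum_antidiagonal {l : ℝ} (hl : l ≠ 0) (n N : ℕ) :
    dS2 l n N = ∑ p ∈ antidiagonal N, dfall l p.1 n / p.1 ! * ((-1) ^ p.2 / p.2 !) := by
  rw [dS2, sub_eq_add_neg, (Commute.all _ _).add_pow', map_sum, mul_sum]
  refine sum_congr rfl fun p hp => ?_
  rw [HasAntidiagonal.mem_antidiagonal] at hp
  have hterm : N.choose p.1 • (degExp l 1 ^ p.1 * (-1) ^ p.2)
      = C ((N.choose p.1 : ℝ) * (-1) ^ p.2) * degExp l p.1 := by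
    rw [degExp_one_pow hl, nsmul_eq_mul, map_mul, map_pow, map_neg, map_one, map_natCast]
    ring
  rw [hterm, coeff_C_mul, coeff_degExp, ← hp, Nat.cast_add_choose]
  field_simp

lemma dS2_eq_zero_of_lt (l : ℝ) {n N : ℕ} (h : n < N) : dS2 l n N = 0 := by
  have hX : X ∣ degExp l 1 - 1 := by
    rw [X_dvd_iff, map_sub, ← coeff_zero_eq_constantCoeff_apply, coeff_degExp]
    simp [dfall]
  obtain ⟨g, hg⟩ := pow_dvd_pow_of_dvd hX N
  rw [dS2, hg, coeff_X_pow_mul', if_neg (by omega), mul_zero]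

lemma hasSum_dfall_add_div_factorial_mul_pow {l : ℝ} (hl : l ≠ 0) (y : ℝ) (k : ℕ) {t : ℝ}
    (ht : |l * t| < 1) :
    HasSum (fun m => dfall l y (k + m) / m ! * t ^ m)
      (dfall l y k * (1 + l * t) ^ (y / l) * ((1 + l * t)⁻¹) ^ k) := by
  have hpos : 0 < 1 + l * t := by linarith [neg_abs_le (l * t)]
  have h := (hasSum_dfall_div_factorial_mul_pow hl (y - k * l) ht).mul_left (dfall l y k)
  rw [sub_div, mul_div_cancel_right₀ _ hl, Real.rpow_sub_natCast hpos.ne', div_eq_mul_inv,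
    ← inv_pow, ← mul_assoc] at h
  refine h.congr_fun fun m => ?_
  rw [dfall_add]
  ring

lemma abs_dfall_le {l : ℝ} (hl : 0 ≤ l) (x : ℝ) (n : ℕ) :
    |dfall l x n| ≤ dfall (-l) |x| n := by
  rw [dfall, abs_prod]
  refine prod_le_prod (fun _ _ => abs_nonneg _) fun i _ => ?_
  rw [mul_neg, sub_neg_eq_add]
  exact (abs_sub _ _).trans (by rw [abs_of_nonneg (a := (i : ℝ) * l) (by positivity)])

lemma dfall_neg_nonneg {l a : ℝ} (hl : 0 ≤ l) (ha : 0 ≤ a) (n : ℕ) : 0 ≤ dfall (-l) a n :=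
  prod_nonneg fun i _ => by rw [mul_neg, sub_neg_eq_add]; positivity

lemma abs_dfall_natCast_mul_pow_le {l : ℝ} (hl0 : 0 ≤ l) (hl1 : l ≤ 1) {a : ℝ}
    (ha : 0 ≤ a) {k N : ℕ} (hkN : k ≤ N) (n : ℕ) : |dfall l k n| * l ^ n ≤ dfall (-l) (a + N * l) n := by
  rw [dfall, abs_prod, pow_eq_prod_const, ← prod_mul_distrib]
  refine prod_le_prod (fun _ _ => by positivity) fun i _ => ?_
  have hk : (k : ℝ) ≤ N := by exact_mod_cast hkN
  have hi : (0 : ℝ) ≤ i := i.cast_nonneg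
  have habs : |(k : ℝ) - i * l| ≤ k + i * l :=
    (abs_sub _ _).trans (by rw [Nat.abs_cast, abs_of_nonneg (by positivity)])
  calc |(k : ℝ) - i * l| * l ≤ (k + i * l) * l := by gcongr
    _ ≤ a + N * l - i * -l := by nlinarith [mul_le_mul_of_nonneg_left hl1 (mul_nonneg hi hl0)]

lemma HasSum.sum_antidiagonal {α : Type*} [AddCommMonoid α] [TopologicalSpace α]
    [ContinuousAdd α] [T3Space α] {f : ℕ × ℕ → α} {s : α} (hf : HasSum f s) :
    HasSum (fun N => ∑ p ∈ antidiagonal N, f p) s := by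
  have hsigma := (HasAntidiagonal.sigmaAntidiagonalEquivProd.hasSum_iff (f := f)).mpr hf
  refine hsigma.sigma fun N => ?_
  rw [← sum_coe_sort]
  exact hasSum_fintype _

def dobinskiTerm (l x : ℝ) (n : ℕ) (p : ℕ × ℕ) : ℝ :=
  dfall l p.1 n / p.1 ! * (dfall l x (p.1 + p.2) / p.2 ! * (-1) ^ p.2)

section Dobinski

variable {l : ℝ} (x : ℝ) (n : ℕ)

lemma dobinskiTerm_sum_antidiagonal (hl : l ≠ 0) (N : ℕ) :
    ∑ p ∈ antidiagonal N, dobinskiTerm l x n p = dS2 l n N * dfall l x N := by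
  rw [dS2_eq_sum_antidiagonal hl, sum_mul]
  refine sum_congr rfl fun p hp => ?_
  rw [dobinskiTerm, HasAntidiagonal.mem_antidiagonal.mp hp]
  ring

lemma hasSum_dobinskiTerm_sum_antidiagonal (hl : l ≠ 0) :
    HasSum (fun N => ∑ p ∈ antidiagonal N, dobinskiTerm l x n p) (dBell l n x) := by
  simp only [dobinskiTerm_sum_antidiagonal x n hl]
  refine hasSum_sum_of_ne_finset_zero fun N hN => ?_
  rw [dS2_eq_zero_of_lt l (by simpa using hN), zero_mul]

lemma hasSum_dobinskiTerm_right (hl : l ≠ 0) (hl1 : |l| < 1) (k : ℕ) :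
    HasSum (fun m => dobinskiTerm l x n (k, m))
      ((1 - l) ^ (x / l) * (dfall l k n / k ! * (1 / (1 - l)) ^ k * dfall l x k)) := by
  have h := (hasSum_dfall_add_div_factorial_mul_pow hl x k (t := -1)
    (by rwa [mul_neg_one, abs_neg])).mul_left (dfall l k n / k !)
  rw [mul_neg_one, ← sub_eq_add_neg, ← one_div] at h
  rw [show (1 - l) ^ (x / l) * (dfall l k n / k ! * (1 / (1 - l)) ^ k * dfall l x k)
      = dfall l k n / k ! * (dfall l x k * (1 - l) ^ (x / l) * (1 / (1 - l)) ^ k) by ring]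
  exact h

lemma abs_dobinskiTerm_le (hl0 : 0 < l) (hl1 : l ≤ 1) (p : ℕ × ℕ) :
    |dobinskiTerm l x n p| ≤ dfall (-l) |x| n / l ^ n
      * (1 / p.1 ! * (dfall (-l) (|x| + n * l) (p.1 + p.2) / p.2 !)) := by
  obtain ⟨k, m⟩ := p
  have hcoeff := abs_dfall_natCast_mul_pow_le hl0.le hl1 (abs_nonneg x) (le_add_right le_rfl) n
    (k := k) (N := k + m)
  have hfall := abs_dfall_le hl0.le x (k + m)
  -- the coefficient `|(k)_{n,λ}|` is absorbed by the shift `(|x|)_{k+m,-λ} ↦ (|x|)_{k+m+n,-λ}`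
  have hsplit : dfall (-l) |x| (k + m) * dfall (-l) (|x| + ↑(k + m) * l) n
      = dfall (-l) |x| n * dfall (-l) (|x| + n * l) (k + m) := by
    rw [← sub_neg_eq_add, ← mul_neg, ← dfall_add, add_comm, dfall_add, mul_neg,
      sub_neg_eq_add]
  have hprod : |dfall l k n| * |dfall l x (k + m)|
      ≤ dfall (-l) |x| n * dfall (-l) (|x| + n * l) (k + m) / l ^ n := by
    rw [← hsplit, le_div_iff₀ (by positivity)]
    calc |dfall l k n| * |dfall l x (k + m)| * l ^ n
        = |dfall l k n| * l ^ n * |dfall l x (k + m)| := by ring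
      _ ≤ dfall (-l) (|x| + ↑(k + m) * l) n * dfall (-l) |x| (k + m) :=
        mul_le_mul hcoeff hfall (abs_nonneg _) (dfall_neg_nonneg hl0.le (by positivity) n)
      _ = _ := by ring
  simp only [dobinskiTerm, abs_mul, abs_div, abs_pow, abs_neg, abs_one, one_pow, mul_one,
    Nat.abs_cast]
  calc |dfall l k n| / k ! * (|dfall l x (k + m)| / m !)
      = |dfall l k n| * |dfall l x (k + m)| / (k ! * m !) := by ring
    _ ≤ dfall (-l) |x| n * dfall (-l) (|x| + n * l) (k + m) / l ^ n / (k ! * m !) := by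
      gcongr
    _ = _ := by ring

lemma summable_dobinskiTerm (hl0 : 0 < l) (hl1 : l < 1 / 2) : Summable (dobinskiTerm l x n) := by
  have hneg : -l ≠ 0 := neg_ne_zero.mpr hl0.ne'
  have hsub : 0 < 1 - l := by linarith
  set y := |x| + n * l
  set C := dfall (-l) |x| n / l ^ n
  have hC : 0 ≤ C := div_nonneg (dfall_neg_nonneg hl0.le (abs_nonneg x) n) (by positivity)
  have hinner : ∀ k : ℕ, HasSum (fun m => dfall (-l) y (k + m) / m !)
      (dfall (-l) y k * (1 - l) ^ (y / -l) * ((1 - l)⁻¹) ^ k) := fun k => by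
    simpa [← sub_eq_add_neg] using hasSum_dfall_add_div_factorial_mul_pow hneg y k (t := 1)
      (by rw [mul_one, abs_neg, abs_of_pos hl0]; linarith)
  have houter : Summable fun k => dfall (-l) y k / k ! * ((1 - l)⁻¹) ^ k :=
    (hasSum_dfall_div_factorial_mul_pow hneg y (t := (1 - l)⁻¹) (by
      rw [abs_mul, abs_neg, abs_of_pos hl0, abs_inv, abs_of_pos hsub, ← div_eq_mul_inv,
        div_lt_one hsub]
      linarith)).summable
  have hmajorant :
      Summable fun p : ℕ × ℕ => C * (1 / p.1 ! * (dfall (-l) y (p.1 + p.2) / p.2 !)) := by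
    refine (summable_prod_of_nonneg fun p => ?_).mpr ⟨fun k => ?_, ?_⟩
    · have := dfall_neg_nonneg hl0.le (by positivity : 0 ≤ y) (p.1 + p.2)
      dsimp only [Pi.zero_apply]
      positivity
    · exact ((hinner k).summable.mul_left (1 / (k ! : ℝ))).mul_left C
    · simp only [tsum_mul_left, (hinner _).tsum_eq]
      exact (houter.mul_left (C * (1 - l) ^ (y / -l))).congr fun k => by ring
  exact hmajorant.of_norm_bounded fun p => abs_dobinskiTerm_le x n hl0 (by linarith) p

end Dobinski

theorem stmt2 (l : ℝ) (h0 : 0 < l) (h1 : l < 1 / 2) (x : ℝ) (n : ℕ) :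
    Summable (fun k : ℕ => dfall l (k : ℝ) n / k ! * (1 / (1 - l)) ^ k * dfall l x k) ∧
      dBell l n x =
        (1 - l) ^ (x / l) *
          ∑' k : ℕ, dfall l (k : ℝ) n / k ! * (1 / (1 - l)) ^ k * dfall l x k := by
  have hl : l ≠ 0 := h0.ne'
  have hsum := (summable_dobinskiTerm x n h0 h1).hasSum
  have htotal : ∑' p, dobinskiTerm l x n p = dBell l n x :=
    hsum.sum_antidiagonal.unique (hasSum_dobinskiTerm_sum_antidiagonal x n hl)
  rw [htotal] at hsum
  have hrows := hsum.prod_fiberwise (hasSum_dobinskiTerm_right x n hl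
    (by rw [abs_of_pos h0]; linarith))
  have hc : (1 - l) ^ (x / l) ≠ 0 := (Real.rpow_pos_of_pos (by linarith) _).ne'
  rw [← mul_div_cancel_left₀ (dBell l n x) hc, mul_div_assoc, hasSum_mul_left_iff hc] at hrows
  exact ⟨hrows.summable, by rw [hrows.tsum_eq, mul_div_cancel₀ _ hc]⟩
end
end

section
/- Let λ be a nonzero real number and let r be an integer. For every n ≥ 0, the degenerate poly-Bell polynomials satisfy B_{n,λ}^{(r)}(x) = Σ_{k=0}^{n} { Σ_{l=k}^{n} C(n,l) S_{1,λ}(l,k) B_{n−l,λ}^{(r)} } φ_{k,λ}(x) as polynomials in x, where C(n,l) is the binomial coefficient. -/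
open Nat PowerSeries Finset

noncomputable section

/-!
Write `E = e_λ(t)`, `L = log_λ(1+t)` and `A = Ei_{r,λ}(L)/(E - 1)`, so that
`B_{n,λ}^{(r)}(x) = n! [tⁿ] A(t) e_λ^x(t)` and `B_{n,λ}^{(r)} = n! [tⁿ] A(t)`.
From `(1 + λt) E' = E` and `(1 + t) L' = 1 + λL`, the chain rule shows that `E(L)` and `1 + t`
both solve `(1 + t) F' = F` with the same constant term, so `(E - 1)(L) = t`.
Now `φ_{k,λ}(x) = k! [tᵏ] e_λ^x(E - 1)` and, by Leibniz's rule,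
`Σ_j C(n,j) S_{1,λ}(j,k) B_{n-j,λ}^{(r)} = n!/k! [tⁿ] Lᵏ A`. Hence the right-hand side is
`n! [tⁿ] (e_λ^x(E - 1))(L) · A = n! [tⁿ] e_λ^x(t) A(t)`.
-/

namespace PowerSeries

variable {R : Type*}

theorem coeff_pow_mul_eq_zero_of_lt [CommSemiring R] {g : R⟦X⟧} (hg : constantCoeff g = 0)
    (B : R⟦X⟧) {k p : ℕ} (h : p < k) : coeff p (g ^ k * B) = 0 :=
  X_pow_dvd_iff.mp (dvd_mul_of_dvd_left (pow_dvd_pow_of_dvd (X_dvd_iff.mpr hg) k) B) p h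

theorem coeff_pow_eq_zero_of_lt [CommSemiring R] {g : R⟦X⟧} (hg : constantCoeff g = 0)
    {k p : ℕ} (h : p < k) : coeff p (g ^ k) = 0 := by
  simpa using coeff_pow_mul_eq_zero_of_lt hg 1 h

theorem coeff_subst_mul [CommRing R] {g : R⟦X⟧} (hg : constantCoeff g = 0) (f A : R⟦X⟧)
    (n : ℕ) :
    coeff n (f.subst g * A) = ∑ k ∈ range (n + 1), coeff k f * coeff n (g ^ k * A) := by
  have hsub := HasSubst.of_constantCoeff_zero' hg
  have hhigh : ∀ s : R⟦X⟧, coeff n ((X ^ (n + 1) * s).subst g * A) = 0 := fun s => by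
    rw [subst_mul hsub, subst_pow hsub, subst_X hsub, mul_assoc,
      coeff_pow_mul_eq_zero_of_lt hg _ n.lt_succ_self]
  conv_lhs => rw [eq_X_pow_mul_shift_add_trunc (n + 1) f]
  rw [subst_add hsub, add_mul, map_add, hhigh, zero_add, subst_coe hsub,
    Polynomial.aeval_eq_sum_range' (natDegree_trunc_lt f n), Finset.sum_mul, map_sum]
  refine Finset.sum_congr rfl fun k hk => ?_
  rw [coeff_trunc, if_pos (Finset.mem_range.mp hk), smul_mul_assoc, coeff_smul, smul_eq_mul]

theorem coeff_subst_eq_sum [CommRing R] {g : R⟦X⟧} (hg : constantCoeff g = 0) (f : R⟦X⟧)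
    (n : ℕ) :
    coeff n (f.subst g) = ∑ k ∈ range (n + 1), coeff k f * coeff n (g ^ k) := by
  simpa using coeff_subst_mul hg f 1 n

theorem factorial_mul_coeff_mul [CommSemiring R] (F G : R⟦X⟧) (n : ℕ) :
    (n ! : R) * coeff n (F * G) = ∑ j ∈ range (n + 1),
      (n.choose j : R) * ((j ! : R) * coeff j F) * (((n - j)! : R) * coeff (n - j) G) := by
  rw [coeff_mul, Finset.Nat.sum_antidiagonal_eq_sum_range_succ_mk, Finset.mul_sum]
  refine Finset.sum_congr rfl fun j hj => ?_
  have hfac : (n.choose j : R) * j ! * (n - j)! = n ! := by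
    rw [← Nat.cast_mul, ← Nat.cast_mul,
      Nat.choose_mul_factorial_mul_factorial (Nat.lt_succ_iff.mp (mem_range.mp hj))]
  rw [← hfac]
  ring

theorem eq_zero_of_one_add_X_mul_derivative_eq_self [CommRing R] [IsAddTorsionFree R]
    {F : R⟦X⟧} (hF : (1 + X) * d⁄dX R F = F) (h0 : constantCoeff F = 0) : F = 0 := by
  refine PowerSeries.ext fun n => ?_
  rw [map_zero]
  induction n with
  | zero => simpa using h0
  | succ n ih =>
    have h := congrArg (coeff n) hF
    rw [add_mul, one_mul, map_add, coeff_derivative, ih] at h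
    rcases n with _ | n
    · simpa [coeff_zero_X_mul, ← nsmul_eq_mul', nsmul_eq_zero_iff_right] using h
    · rwa [coeff_succ_X_mul, coeff_derivative, ih, zero_mul, add_zero, ← Nat.cast_succ,
        ← nsmul_eq_mul', nsmul_eq_zero_iff_right (Nat.succ_ne_zero _)] at h

end PowerSeries

theorem constantCoeff_degLog (l : ℝ) : constantCoeff (degLog l) = 0 := by
  rw [← coeff_zero_eq_constantCoeff_apply]
  simp [degLog]

theorem constantCoeff_degExp_one_sub_one (l : ℝ) : constantCoeff (degExp l 1 - 1) = 0 := by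
  rw [← coeff_zero_eq_constantCoeff_apply]
  simp [degExp, dfall]

theorem degExp_zero_right (l : ℝ) : degExp l 0 = 1 := by
  ext n
  rcases n with _ | n
  · simp [degExp, dfall]
  · simp [degExp, dfall, Finset.prod_range_succ', coeff_one]

theorem one_add_C_mul_X_mul_derivative_degExp (l x : ℝ) :
    (1 + C l * X) * d⁄dX ℝ (degExp l x) = C x * degExp l x := by
  ext n
  have hfall : dfall l x (n + 1) = dfall l x n * (x - n * l) := by
    simp [dfall, Finset.prod_range_succ]
  rw [add_mul, one_mul, mul_assoc, map_add, coeff_C_mul, coeff_C_mul, coeff_derivative]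
  rcases n with _ | n
  · simp [degExp, dfall]
  · rw [coeff_succ_X_mul, coeff_derivative]
    simp only [degExp, coeff_mk, hfall, Nat.factorial_succ]
    push_cast
    field_simp
    ring

theorem one_add_X_mul_derivative_degLog (l : ℝ) :
    (1 + X) * d⁄dX ℝ (degLog l) = 1 + C l * degLog l := by
  ext n
  rw [add_mul, one_mul, map_add, map_add, coeff_derivative, coeff_C_mul]
  rcases n with _ | n
  · simp [degLog, coeff_zero_X_mul]
  · rw [coeff_succ_X_mul, coeff_derivative]
    simp only [degLog, coeff_mk, coeff_one, Nat.succ_ne_zero, if_false, Nat.add_sub_cancel,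
      Finset.prod_range_succ, Nat.factorial_succ]
    push_cast
    field_simp
    ring

theorem degExp_subst_degLog (l : ℝ) : (degExp l 1).subst (degLog l) = 1 + X := by
  have hL := HasSubst.of_constantCoeff_zero' (constantCoeff_degLog l)
  have hE := one_add_C_mul_X_mul_derivative_degExp l 1
  rw [map_one, one_mul] at hE
  have hF : (1 + X) * d⁄dX ℝ ((degExp l 1).subst (degLog l)) =
      (degExp l 1).subst (degLog l) := by
    rw [derivative_subst hL, mul_left_comm, one_add_X_mul_derivative_degLog]
    conv_rhs => rw [← hE]
    rw [subst_mul hL, mul_comm, subst_add hL, subst_mul hL, subst_X hL, ← map_one C, subst_C,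
      subst_C, map_one]
    rfl
  have hF0 : constantCoeff ((degExp l 1).subst (degLog l) : ℝ⟦X⟧) = 1 := by
    rw [← coeff_zero_eq_constantCoeff_apply, coeff_subst_eq_sum (constantCoeff_degLog l)]
    simp [degExp, dfall]
  refine sub_eq_zero.mp (eq_zero_of_one_add_X_mul_derivative_eq_self ?_ ?_)
  · rw [map_sub, mul_sub, hF]
    simp
  · simp [hF0]

theorem degExp_one_sub_one_subst_degLog (l : ℝ) : (degExp l 1 - 1).subst (degLog l) = X := by
  have hL := HasSubst.of_constantCoeff_zero' (constantCoeff_degLog l)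
  rw [subst_sub hL, degExp_subst_degLog, ← map_one C, subst_C, map_one, map_one,
    add_sub_cancel_left]

theorem dBell_eq_factorial_mul_coeff_subst (l : ℝ) (k : ℕ) (x : ℝ) :
    dBell l k x = k ! * coeff k ((degExp l x).subst (degExp l 1 - 1)) := by
  rw [coeff_subst_eq_sum (constantCoeff_degExp_one_sub_one l), dBell, Finset.mul_sum]
  refine Finset.sum_congr rfl fun m _ => ?_
  simp only [dS2, degExp, coeff_mk]
  ring

theorem sum_choose_mul_dS1_mul (l : ℝ) (A : ℝ⟦X⟧) (n k : ℕ) :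
    ∑ j ∈ Icc k n, n.choose j * dS1 l j k * ((n - j)! * coeff (n - j) A)
      = n ! / k ! * coeff n (degLog l ^ k * A) := by
  have hvanish : ∀ j ∈ range (n + 1), j ∉ Icc k n →
      n.choose j * dS1 l j k * ((n - j)! * coeff (n - j) A) = 0 := by
    intro j hj hjk
    have hjk : j < k := by
      simp only [mem_Icc, mem_range] at hj hjk
      omega
    rw [dS1, coeff_pow_eq_zero_of_lt (constantCoeff_degLog l) hjk]
    ring
  rw [Finset.sum_subset (fun j hj => by simp only [mem_Icc, mem_range] at hj ⊢; omega) hvanish,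
    div_mul_eq_mul_div, factorial_mul_coeff_mul, Finset.sum_div]
  refine Finset.sum_congr rfl fun j _ => ?_
  rw [dS1]
  ring

def degAppell (l : ℝ) (A : ℝ⟦X⟧) (n : ℕ) (x : ℝ) : ℝ :=
  n ! * coeff n (A * degExp l x)

theorem degAppell_zero_right (l : ℝ) (A : ℝ⟦X⟧) (n : ℕ) :
    degAppell l A n 0 = n ! * coeff n A := by
  rw [degAppell, degExp_zero_right, mul_one]

theorem degAppell_eq_sum_dS1_dBell (l : ℝ) (A : ℝ⟦X⟧) (n : ℕ) (x : ℝ) :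
    degAppell l A n x = ∑ k ∈ range (n + 1),
      (∑ j ∈ Icc k n, n.choose j * dS1 l j k * degAppell l A (n - j) 0) * dBell l k x := by
  simp only [degAppell_zero_right, sum_choose_mul_dS1_mul, dBell_eq_factorial_mul_coeff_subst]
  have hL := HasSubst.of_constantCoeff_zero' (constantCoeff_degLog l)
  have hE := HasSubst.of_constantCoeff_zero' (constantCoeff_degExp_one_sub_one l)
  set G : ℝ⟦X⟧ := (degExp l x).subst (degExp l 1 - 1)
  have hG : G.subst (degLog l) = degExp l x := by
    rw [subst_comp_subst_apply hE hL, degExp_one_sub_one_subst_degLog, X_subst]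
  calc degAppell l A n x = n ! * coeff n (G.subst (degLog l) * A) := by
        rw [degAppell, hG, mul_comm A]
    _ = n ! * ∑ k ∈ range (n + 1), coeff k G * coeff n (degLog l ^ k * A) := by
        rw [coeff_subst_mul (constantCoeff_degLog l)]
    _ = _ := by
        rw [Finset.mul_sum]
        refine Finset.sum_congr rfl fun k _ => ?_
        field_simp

theorem dPolyBell_eq_degAppell (r : ℤ) (l : ℝ) :
    dPolyBell r l = degAppell l
      (divT (psComp (fun k => if k = 0 then 0 else dfall l 1 k / ((k - 1)! * (k : ℝ) ^ r))
        (degLog l)) * (divT (degExp l 1 - 1))⁻¹) :=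
  rfl

theorem stmt7_general (l : ℝ) (r : ℤ) (n : ℕ) (x : ℝ) :
    dPolyBell r l n x =
      ∑ k ∈ range (n + 1),
        (∑ j ∈ Icc k n, n.choose j * dS1 l j k * dPolyBell r l (n - j) 0) * dBell l k x := by
  rw [dPolyBell_eq_degAppell]
  exact degAppell_eq_sum_dS1_dBell l _ n x

theorem stmt7 (l : ℝ) (hl : l ≠ 0) (r : ℤ) (n : ℕ) (x : ℝ) :
    dPolyBell r l n x =
      ∑ k ∈ range (n + 1),
        (∑ j ∈ Icc k n, n.choose j * dS1 l j k * dPolyBell r l (n - j) 0) * dBell l k x :=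
  stmt7_general l r n x

end
end
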